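/- arXiv:1803.02182 — 6 statements merged into one kernel-verified Lean document; each statement's English description precedes it below -/
import Mathlib

section
/- Let Q ∈ ℝ^{n×n} be symmetric positive definite, let S ∈ ℝ^{r×n} have full row rank with r < n, and let T_x ∈ ℝ^{n×n} and T_ν ∈ ℝ^{r×r} be diagonal positive definite matrices. Then the saddle-point system matrix A = [[−T_x⁻¹Q, −T_x⁻¹Sᵀ], [T_ν⁻¹S, 0]] ∈ ℝ^{(n+r)×(n+r)} is Hurwitz, i.e., every complex eigenvalue of A has strictly negative real part. -/
open Matrix
open scoped ComplexOrder

/-!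
Let `(x, ν)` be an eigenvector of `A` for `μ`. Multiplying the two block rows by `Tx` and `Tν` gives
`μ Tx x = -Q x - Sᴴ ν` and `μ Tν ν = S x`. Pairing them with `x` and `ν`, the coupling terms
`xᴴ Sᴴ ν` and `νᴴ S x` are complex conjugates, so adding real parts leaves
`Re μ · (xᴴ Tx x + νᴴ Tν ν) = -xᴴ Q x`. Full row rank of `S` rules out `x = 0`, hence the right
side is negative while the bracket is nonnegative. To run this over `ℂ`, the real matrices are
complexified; positive definiteness and injectivity survive by splitting vectors into real and
imaginary parts.
-/

namespace Matrix

section Complexification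

variable {m n : Type*} [Fintype n]

theorem re_map_ofReal_mulVec_apply (M : Matrix m n ℝ) (x : n → ℂ) (i : m) :
    ((M.map (↑) *ᵥ x) i).re = (M *ᵥ (Complex.re ∘ x)) i := by
  simp [mulVec, dotProduct, Complex.re_sum]

theorem im_map_ofReal_mulVec_apply (M : Matrix m n ℝ) (x : n → ℂ) (i : m) :
    ((M.map (↑) *ᵥ x) i).im = (M *ᵥ (Complex.im ∘ x)) i := by
  simp [mulVec, dotProduct, Complex.im_sum]

theorem injective_map_ofReal_mulVec {M : Matrix m n ℝ} (hM : Function.Injective M.mulVec) :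
    Function.Injective (M.map ((↑) : ℝ → ℂ)).mulVec := by
  intro x y hxy
  have hre : Complex.re ∘ x = Complex.re ∘ y := hM <| funext fun i => by
    rw [← re_map_ofReal_mulVec_apply, ← re_map_ofReal_mulVec_apply, hxy]
  have him : Complex.im ∘ x = Complex.im ∘ y := hM <| funext fun i => by
    rw [← im_map_ofReal_mulVec_apply, ← im_map_ofReal_mulVec_apply, hxy]
  exact funext fun j => Complex.ext (congrFun hre j) (congrFun him j)

theorem star_dotProduct_map_ofReal_mulVec {M : Matrix n n ℝ} (hM : M.IsSymm) (x : n → ℂ) :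
    star x ⬝ᵥ (M.map (↑) *ᵥ x) =
      (((Complex.re ∘ x) ⬝ᵥ (M *ᵥ (Complex.re ∘ x)) +
        (Complex.im ∘ x) ⬝ᵥ (M *ᵥ (Complex.im ∘ x)) : ℝ) : ℂ) := by
  apply Complex.ext
  · simp [dotProduct, Complex.re_sum, re_map_ofReal_mulVec_apply, im_map_ofReal_mulVec_apply,
      Finset.sum_add_distrib]
  · have hsymm : (Complex.re ∘ x) ⬝ᵥ (M *ᵥ (Complex.im ∘ x)) =
        (Complex.im ∘ x) ⬝ᵥ (M *ᵥ (Complex.re ∘ x)) := by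
      rw [dotProduct_mulVec, ← mulVec_transpose, hM, dotProduct_comm]
    simpa [dotProduct, Complex.im_sum, re_map_ofReal_mulVec_apply, im_map_ofReal_mulVec_apply,
      sub_eq_add_neg, Finset.sum_add_distrib] using sub_eq_zero.mpr hsymm

theorem PosDef.map_ofReal {M : Matrix n n ℝ} (hM : M.PosDef) :
    (M.map ((↑) : ℝ → ℂ)).PosDef := by
  refine .of_dotProduct_mulVec_pos (hM.isHermitian.map _ fun _ => by simp) fun x hx => ?_
  rw [star_dotProduct_map_ofReal_mulVec (isHermitian_iff_isSymm.mp hM.isHermitian),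
    Complex.zero_lt_real]
  have hnonneg (v : n → ℝ) : 0 ≤ v ⬝ᵥ (M *ᵥ v) := by
    simpa using hM.posSemidef.dotProduct_mulVec_nonneg v
  have hpos {v : n → ℝ} (hv : v ≠ 0) : 0 < v ⬝ᵥ (M *ᵥ v) := by
    simpa using hM.dotProduct_mulVec_pos hv
  by_cases hre : Complex.re ∘ x = 0
  · have him : Complex.im ∘ x ≠ 0 := fun him =>
      hx <| funext fun j => Complex.ext (congrFun hre j) (congrFun him j)
    exact add_pos_of_nonneg_of_pos (hnonneg _) (hpos him)
  · exact add_pos_of_pos_of_nonneg (hpos hre) (hnonneg _)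

end Complexification

theorem map_nonsing_inv {n K L : Type*} [Fintype n] [DecidableEq n] [Field K] [Field L]
    (f : K →+* L) (M : Matrix n n K) : M⁻¹.map f = (M.map f)⁻¹ := by
  rw [inv_def, inv_def, Ring.inverse_eq_inv', Ring.inverse_eq_inv', ← RingHom.mapMatrix_apply,
    ← RingHom.mapMatrix_apply, ← RingHom.map_det, ← RingHom.map_adjugate, RingHom.mapMatrix_apply,
    RingHom.mapMatrix_apply, Matrix.map_smul' _ _ _ (map_mul f), map_inv₀]

theorem injective_transpose_mulVec_of_rank_eq {m n K : Type*} [Fintype m] [Fintype n] [Field K]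
    {S : Matrix m n K} (hS : S.rank = Fintype.card m) : Function.Injective Sᵀ.mulVec := by
  rw [mulVec_injective_iff, col_transpose, linearIndependent_iff_card_eq_finrank_span, ← hS,
    rank_eq_finrank_span_row]
  rfl

theorem exists_mulVec_eq_smul_of_mem_spectrum {n K : Type*} [Fintype n] [DecidableEq n] [Field K]
    {A : Matrix n n K} {μ : K} (hμ : μ ∈ spectrum K A) : ∃ v ≠ 0, A *ᵥ v = μ • v := by
  rw [← spectrum_toLin', ← Module.End.hasEigenvalue_iff_mem_spectrum] at hμ
  obtain ⟨v, hv⟩ := hμ.exists_hasEigenvector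
  exact ⟨v, hv.2, hv.apply_eq_smul⟩

end Matrix

section SaddlePoint

variable {m n : Type*} [Fintype m] [Fintype n] {𝕜 : Type*} [RCLike 𝕜]

theorem re_lt_zero_of_saddlePoint_eigen_eqs {Q Tx : Matrix n n 𝕜} {Tν : Matrix m m 𝕜}
    {S : Matrix m n 𝕜} (hQ : Q.PosDef) (hTx : Tx.PosSemidef) (hTν : Tν.PosSemidef)
    {μ : 𝕜} {x : n → 𝕜} {ν : m → 𝕜} (hx0 : x ≠ 0)
    (hx : μ • (Tx *ᵥ x) = -(Q *ᵥ x) - Sᴴ *ᵥ ν) (hν : μ • (Tν *ᵥ ν) = S *ᵥ x) :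
    RCLike.re μ < 0 := by
  set p := star x ⬝ᵥ (Tx *ᵥ x)
  set q := star ν ⬝ᵥ (Tν *ᵥ ν)
  set w := star ν ⬝ᵥ (S *ᵥ x)
  have hw : star x ⬝ᵥ (Sᴴ *ᵥ ν) = star w := by
    rw [star_dotProduct, star_mulVec, conjTranspose_conjTranspose, ← dotProduct_mulVec]
  have hp : μ * p = -(star x ⬝ᵥ (Q *ᵥ x)) - star w := by
    simpa [dotProduct_sub, hw] using congrArg (star x ⬝ᵥ ·) hx
  have hq : μ * q = w := by
    simpa using congrArg (star ν ⬝ᵥ ·) hν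
  have hp_im : RCLike.im p = 0 := (RCLike.nonneg_iff.mp (hTx.dotProduct_mulVec_nonneg x)).2
  have hq_im : RCLike.im q = 0 := (RCLike.nonneg_iff.mp (hTν.dotProduct_mulVec_nonneg ν)).2
  have key : RCLike.re μ * (RCLike.re p + RCLike.re q) = -RCLike.re (star x ⬝ᵥ (Q *ᵥ x)) := by
    have hp_re := congrArg RCLike.re hp
    have hq_re := congrArg RCLike.re hq
    simp only [RCLike.mul_re, hp_im, hq_im, mul_zero, sub_zero, map_sub, map_neg,
      RCLike.star_def, RCLike.conj_re] at hp_re hq_re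
    linarith
  refine neg_of_mul_neg_left ?_ (add_nonneg (hTx.re_dotProduct_nonneg x)
    (hTν.re_dotProduct_nonneg ν))
  rw [key, neg_lt_zero]
  exact hQ.re_dotProduct_pos hx0

variable [DecidableEq m] [DecidableEq n]

/-- `Sᴴ` stands for the paper's `Sᵀ`, so that the matrix commutes with complexification. -/
noncomputable def saddlePointMatrix {K : Type*} [CommRing K] [StarRing K] (Q : Matrix n n K)
    (S : Matrix m n K) (Tx : Matrix n n K) (Tν : Matrix m m K) : Matrix (n ⊕ m) (n ⊕ m) K :=
  fromBlocks (-(Tx⁻¹ * Q)) (-(Tx⁻¹ * Sᴴ)) (Tν⁻¹ * S) 0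

theorem saddlePointMatrix_map {K L : Type*} [Field K] [StarRing K] [Field L] [StarRing L]
    (f : K →+* L) (hf : Function.Semiconj f star star) (Q : Matrix n n K) (S : Matrix m n K)
    (Tx : Matrix n n K) (Tν : Matrix m m K) :
    (saddlePointMatrix Q S Tx Tν).map f =
      saddlePointMatrix (Q.map f) (S.map f) (Tx.map f) (Tν.map f) := by
  rw [saddlePointMatrix, saddlePointMatrix, fromBlocks_map, Matrix.map_neg _ (map_neg f),
    Matrix.map_neg _ (map_neg f), Matrix.map_mul, Matrix.map_mul, Matrix.map_mul,
    map_nonsing_inv, map_nonsing_inv, conjTranspose_map _ hf, Matrix.map_zero f (map_zero f)]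

theorem re_lt_zero_of_mem_spectrum_saddlePointMatrix {Q Tx : Matrix n n 𝕜}
    {Tν : Matrix m m 𝕜} {S : Matrix m n 𝕜} (hQ : Q.PosDef) (hTx : Tx.PosDef) (hTν : Tν.PosDef)
    (hS : Function.Injective Sᴴ.mulVec) {μ : 𝕜}
    (hμ : μ ∈ spectrum 𝕜 (saddlePointMatrix Q S Tx Tν)) : RCLike.re μ < 0 := by
  obtain ⟨v, hv0, hv⟩ := exists_mulVec_eq_smul_of_mem_spectrum hμ
  obtain ⟨x, ν, rfl⟩ : ∃ x ν, v = Sum.elim x ν := ⟨_, _, (Sum.elim_comp_inl_inr v).symm⟩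
  have hsmul : μ • Sum.elim x ν = Sum.elim (μ • x) (μ • ν) := by ext (_ | _) <;> rfl
  rw [saddlePointMatrix, fromBlocks_mulVec, Sum.elim_comp_inl, Sum.elim_comp_inr, hsmul] at hv
  obtain ⟨hx, hν⟩ := Sum.elim_eq_iff.mp hv
  have hTx_det : IsUnit Tx.det := (isUnit_iff_isUnit_det _).mp hTx.isUnit
  have hTν_det : IsUnit Tν.det := (isUnit_iff_isUnit_det _).mp hTν.isUnit
  replace hx : μ • (Tx *ᵥ x) = -(Q *ᵥ x) - Sᴴ *ᵥ ν := by
    simpa [mulVec_add, mulVec_smul, neg_mulVec, mulVec_neg, sub_eq_add_neg, mulVec_mulVec,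
      mul_nonsing_inv_cancel_left _ _ hTx_det] using (congrArg (Tx *ᵥ ·) hx).symm
  replace hν : μ • (Tν *ᵥ ν) = S *ᵥ x := by
    simpa [mulVec_smul, mulVec_mulVec, mul_nonsing_inv_cancel_left _ _ hTν_det]
      using (congrArg (Tν *ᵥ ·) hν).symm
  refine re_lt_zero_of_saddlePoint_eigen_eqs hQ hTx.posSemidef hTν.posSemidef
    (fun hx0 => hv0 ?_) hx hν
  have hν0 : ν = 0 := hS <| by simpa [hx0] using hx
  rw [hx0, hν0, Sum.elim_zero_zero]

end SaddlePoint

theorem saddle_point_matrix_hurwitz_general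
    (n r : ℕ)
    (Q : Matrix (Fin n) (Fin n) ℝ) (hQ : Q.PosDef)
    (S : Matrix (Fin r) (Fin n) ℝ) (hS : S.rank = r)
    (Tx : Matrix (Fin n) (Fin n) ℝ) (hTx : Tx.PosDef)
    (Tν : Matrix (Fin r) (Fin r) ℝ) (hTν : Tν.PosDef) :
    ∀ μ ∈ spectrum ℂ
        ((Matrix.fromBlocks (-(Tx⁻¹ * Q)) (-(Tx⁻¹ * Sᵀ)) (Tν⁻¹ * S)
          (0 : Matrix (Fin r) (Fin r) ℝ)).map Complex.ofReal),
      μ.re < 0 := by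
  intro μ hμ
  have hconj : Function.Semiconj Complex.ofRealHom star star := fun _ => by simp
  rw [← conjTranspose_eq_transpose_of_trivial] at hμ
  change μ ∈ spectrum ℂ ((saddlePointMatrix Q S Tx Tν).map Complex.ofRealHom) at hμ
  rw [saddlePointMatrix_map _ hconj] at hμ
  have hS' : Function.Injective (S.map Complex.ofRealHom)ᴴ.mulVec := by
    rw [← conjTranspose_map _ hconj, conjTranspose_eq_transpose_of_trivial]
    exact injective_map_ofReal_mulVec (injective_transpose_mulVec_of_rank_eq (by simpa using hS))
  exact re_lt_zero_of_mem_spectrum_saddlePointMatrix hQ.map_ofReal hTx.map_ofReal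
    hTν.map_ofReal hS' hμ

/-- The saddle-point system matrix
`A = [[−Tx⁻¹Q, −Tx⁻¹Sᵀ], [Tν⁻¹S, 0]]` is Hurwitz. -/
theorem saddle_point_matrix_hurwitz
    (n r : ℕ) (hrn : r < n)
    (Q : Matrix (Fin n) (Fin n) ℝ) (hQ : Q.PosDef)
    (S : Matrix (Fin r) (Fin n) ℝ) (hS : S.rank = r)
    (Tx : Matrix (Fin n) (Fin n) ℝ) (hTxd : Tx.IsDiag) (hTx : Tx.PosDef)
    (Tν : Matrix (Fin r) (Fin r) ℝ) (hTνd : Tν.IsDiag) (hTν : Tν.PosDef) :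
    ∀ μ ∈ spectrum ℂ
        ((Matrix.fromBlocks (-(Tx⁻¹ * Q)) (-(Tx⁻¹ * Sᵀ)) (Tν⁻¹ * S)
          (0 : Matrix (Fin r) (Fin r) ℝ)).map Complex.ofReal),
      μ.re < 0 :=
  saddle_point_matrix_hurwitz_general n r Q hQ S hS Tx hTx Tν hTν
end

section
/- Let Q ∈ ℝ^{n×n} be symmetric positive definite, let S ∈ ℝ^{r×n} have full row rank with r < n, let T_x ∈ ℝ^{n×n} and T_ν ∈ ℝ^{r×r} be diagonal positive definite, and set A = [[−T_x⁻¹Q, −T_x⁻¹Sᵀ], [T_ν⁻¹S, 0]]. Then there exists ε > 0 such that the matrix P = (1/2)[[T_x, ε T_x Sᵀ], [ε S T_x, T_ν]] is symmetric positive definite and AᵀP + PA is negative definite. -/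
/-!
At `ε = 0` the candidate is `diag(Tx, Tν)` and `-(AᵀP + PA) = diag(2Q, 0)` is only semidefinite.
The coupling `ε` puts `2ε S Sᵀ` into the lower-right block, which is positive definite by the
rank assumption, while it perturbs the upper-left block only by `O(ε)`. Taking Schur complements
with respect to the lower-right blocks, `P` and `-(AᵀP + PA)` are positive definite as soon as
matrices depending continuously on `ε` and equal to `Tx`, resp. `2Q`, at `ε = 0` are, and positive
definiteness is an open condition on symmetric matrices.
-/

open Matrix Filter Topology
open scoped ComplexOrder

namespace Matrix

variable {m n : Type*} [Fintype m] [Fintype n]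

theorem eventually_posDef_of_continuous {X : Type*} [TopologicalSpace X] {f : X → Matrix m m ℝ}
    (hf : Continuous f) (hherm : ∀ x, (f x).IsHermitian) {x₀ : X} (h₀ : (f x₀).PosDef) :
    ∀ᶠ x in 𝓝 x₀, (f x).PosDef := by
  have hsphere : ∀ᶠ x in 𝓝 x₀, ∀ u ∈ Metric.sphere (0 : m → ℝ) 1, 0 < u ⬝ᵥ f x *ᵥ u := by
    refine (isCompact_sphere 0 1).eventually_forall_of_forall_eventually fun u hu => ?_
    have hcont : Continuous fun z : X × (m → ℝ) => z.2 ⬝ᵥ f z.1 *ᵥ z.2 := by fun_prop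
    have hu₀ : u ≠ 0 := ne_zero_of_mem_unit_sphere (⟨u, hu⟩ : Metric.sphere (0 : m → ℝ) 1)
    exact hcont.continuousAt.eventually (lt_mem_nhds (by simpa using h₀.dotProduct_mulVec_pos hu₀))
  filter_upwards [hsphere] with x hx
  refine .of_dotProduct_mulVec_pos (hherm x) fun v hv => ?_
  have hv' : 0 < ‖v‖ := norm_pos_iff.mpr hv
  have hu : ‖v‖⁻¹ • v ∈ Metric.sphere (0 : m → ℝ) 1 := by simp [norm_smul, hv'.ne']
  simpa [mulVec_smul, hv'] using hx _ hu

theorem posDef_mul_transpose_of_rank_eq_card {S : Matrix n m ℝ} (hS : S.rank = Fintype.card n) :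
    (S * Sᵀ).PosDef := by
  have hrows : LinearIndependent ℝ S.row := by
    rw [linearIndependent_iff_card_eq_finrank_span, Set.finrank, ← S.rank_eq_finrank_span_row, hS]
  simpa [conjTranspose_eq_transpose_of_trivial] using
    PosDef.mul_conjTranspose_self S (vecMul_injective_iff.mpr hrows)

def lyapunovDerivative (A P : Matrix m m ℝ) : Matrix m m ℝ :=
  Aᵀ * P + P * A

theorem lyapunovDerivative_smul (A P : Matrix m m ℝ) (c : ℝ) :
    lyapunovDerivative A (c • P) = c • lyapunovDerivative A P := by
  rw [lyapunovDerivative, lyapunovDerivative, Matrix.mul_smul, Matrix.smul_mul, smul_add]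

/-- Twice the certificate `P` of the statement. -/
def lyapunovCandidate (Tx : Matrix m m ℝ) (S : Matrix n m ℝ) (Tν : Matrix n n ℝ) (ε : ℝ) :
    Matrix (m ⊕ n) (m ⊕ n) ℝ :=
  fromBlocks Tx (ε • (Tx * Sᵀ)) (ε • (S * Tx)) Tν

variable [DecidableEq m] [DecidableEq n]

theorem posDef_fromBlocks₂₂_iff {𝕜 : Type*} [RCLike 𝕜] (A : Matrix m m 𝕜)
    (B : Matrix m n 𝕜) {D : Matrix n n 𝕜} (hD : D.PosDef) :
    (fromBlocks A B Bᴴ D).PosDef ↔ (A - B * D⁻¹ * Bᴴ).PosDef := by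
  have : Invertible D := hD.isUnit.invertible
  have hdet : (fromBlocks A B Bᴴ D).det = D.det * (A - B * D⁻¹ * Bᴴ).det := by
    rw [det_fromBlocks₂₂, invOf_eq_nonsing_inv]
  constructor
  · intro h
    rw [((PosDef.fromBlocks₂₂ A B hD).mp h.posSemidef).posDef_iff_det_ne_zero]
    exact right_ne_zero_of_mul (hdet ▸ h.det_pos.ne')
  · intro h
    rw [((PosDef.fromBlocks₂₂ A B hD).mpr h.posSemidef).posDef_iff_det_ne_zero, hdet]
    exact mul_ne_zero hD.det_pos.ne' h.det_pos.ne'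

noncomputable def saddlePointMatrix (Q Tx : Matrix m m ℝ) (S : Matrix n m ℝ)
    (Tν : Matrix n n ℝ) : Matrix (m ⊕ n) (m ⊕ n) ℝ :=
  fromBlocks (-(Tx⁻¹ * Q)) (-(Tx⁻¹ * Sᵀ)) (Tν⁻¹ * S) 0

theorem neg_lyapunovDerivative_saddlePointMatrix {Q Tx : Matrix m m ℝ} {S : Matrix n m ℝ}
    {Tν : Matrix n n ℝ} (hQ : Q.IsSymm) (hTx : Tx.IsSymm) (hTxu : IsUnit Tx) (hTν : Tν.IsSymm)
    (hTνu : IsUnit Tν) (ε : ℝ) :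
    -lyapunovDerivative (saddlePointMatrix Q Tx S Tν) (lyapunovCandidate Tx S Tν ε) =
      fromBlocks ((2 : ℝ) • Q - ε • (Tx * Sᵀ * Tν⁻¹ * S + (Tx * Sᵀ * Tν⁻¹ * S)ᵀ))
        (ε • (Q * Sᵀ)) (ε • (Q * Sᵀ))ᵀ ((2 * ε) • (S * Sᵀ)) := by
  have := hTxu.invertible
  have := hTνu.invertible
  have hTxiT : Tx⁻¹ᵀ = Tx⁻¹ := by rw [transpose_nonsing_inv, hTx.eq]
  have hTνiT : Tν⁻¹ᵀ = Tν⁻¹ := by rw [transpose_nonsing_inv, hTν.eq]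
  simp only [lyapunovDerivative, saddlePointMatrix, lyapunovCandidate, fromBlocks_transpose,
    fromBlocks_multiply, fromBlocks_add, fromBlocks_neg, fromBlocks_inj]
  refine ⟨?_, ?_, ?_, ?_⟩ <;>
    simp only [transpose_neg, transpose_mul, transpose_transpose, transpose_zero,
      transpose_smul, hQ.eq, hTx.eq, hTxiT, hTνiT, Matrix.neg_mul, Matrix.mul_neg,
      Matrix.smul_mul, Matrix.mul_smul, Matrix.zero_mul, Matrix.mul_zero, add_zero, smul_zero,
      Matrix.mul_assoc, inv_mul_cancel_left_of_invertible, mul_inv_cancel_left_of_invertible,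
      inv_mul_of_invertible, Matrix.mul_one] <;>
    module

theorem eventually_posDef_lyapunovCandidate {Tx : Matrix m m ℝ} (S : Matrix n m ℝ)
    {Tν : Matrix n n ℝ} (hTx : Tx.PosDef) (hTν : Tν.PosDef) :
    ∀ᶠ ε in 𝓝 0, (lyapunovCandidate Tx S Tν ε).PosDef := by
  have hB : ∀ ε : ℝ, (ε • (Tx * Sᵀ))ᴴ = ε • (S * Tx) := fun ε => by
    simp [conjTranspose_eq_transpose_of_trivial, (isHermitian_iff_isSymm.mp hTx.1).eq]
  have hschur : ∀ᶠ ε in 𝓝 (0 : ℝ), (Tx - ε • (Tx * Sᵀ) * Tν⁻¹ * (ε • (Tx * Sᵀ))ᴴ).PosDef :=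
    eventually_posDef_of_continuous (by fun_prop)
      (fun _ => hTx.1.sub (isHermitian_mul_mul_conjTranspose _ hTν.1.inv)) (by simpa using hTx)
  filter_upwards [hschur] with ε hε
  rwa [lyapunovCandidate, ← hB, posDef_fromBlocks₂₂_iff _ _ hTν]

theorem eventually_posDef_neg_lyapunovDerivative {Q Tx : Matrix m m ℝ} {S : Matrix n m ℝ}
    {Tν : Matrix n n ℝ} (hQ : Q.PosDef) (hS : (S * Sᵀ).PosDef) (hTx : Tx.PosDef)
    (hTν : Tν.PosDef) :
    ∀ᶠ ε in 𝓝[>] 0,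
      (-lyapunovDerivative (saddlePointMatrix Q Tx S Tν) (lyapunovCandidate Tx S Tν ε)).PosDef := by
  have hQs := isHermitian_iff_isSymm.mp hQ.1
  set C := Tx * Sᵀ * Tν⁻¹ * S
  set K := Q * Sᵀ * (S * Sᵀ)⁻¹ * (Q * Sᵀ)ᴴ
  have hKs : K.IsSymm := isHermitian_iff_isSymm.mp (isHermitian_mul_mul_conjTranspose _ hS.1.inv)
  have hschur : ∀ᶠ ε in 𝓝 (0 : ℝ), ((2 : ℝ) • Q - ε • (C + Cᵀ) - (ε / 2) • K).PosDef :=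
    eventually_posDef_of_continuous (by fun_prop)
      (fun ε => isHermitian_iff_isSymm.mpr
        (((hQs.smul _).sub ((isSymm_add_transpose_self C).smul ε)).sub (hKs.smul _)))
      (by simpa [two_smul] using hQ.add hQ)
  filter_upwards [nhdsWithin_le_nhds hschur, self_mem_nhdsWithin] with ε hε (hεpos : 0 < ε)
  have hK : ε • (Q * Sᵀ) * ((2 * ε) • (S * Sᵀ))⁻¹ * (ε • (Q * Sᵀ))ᴴ = (ε / 2) • K := by
    have : Invertible (2 * ε) := invertibleOfNonzero (by positivity)
    rw [inv_smul _ _ ((isUnit_iff_isUnit_det _).mp hS.isUnit), invOf_eq_inv]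
    simp only [K, Matrix.smul_mul, Matrix.mul_smul, conjTranspose_smul, smul_smul, star_trivial]
    congr 1
    field_simp
  rw [neg_lyapunovDerivative_saddlePointMatrix hQs (isHermitian_iff_isSymm.mp hTx.1) hTx.isUnit
      (isHermitian_iff_isSymm.mp hTν.1) hTν.isUnit,
    ← conjTranspose_eq_transpose_of_trivial (ε • (Q * Sᵀ)),
    posDef_fromBlocks₂₂_iff _ _ (hS.smul (by positivity : (0 : ℝ) < 2 * ε))]
  exact hK ▸ hε

end Matrix

theorem saddle_point_lyapunov_certificate_general
    (n r : ℕ)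
    (Q : Matrix (Fin n) (Fin n) ℝ) (hQ : Q.PosDef)
    (S : Matrix (Fin r) (Fin n) ℝ) (hS : S.rank = r)
    (Tx : Matrix (Fin n) (Fin n) ℝ) (hTx : Tx.PosDef)
    (Tν : Matrix (Fin r) (Fin r) ℝ) (hTν : Tν.PosDef) :
    ∃ ε : ℝ, 0 < ε ∧
      ((1 / 2 : ℝ) •
        Matrix.fromBlocks Tx (ε • (Tx * Sᵀ)) (ε • (S * Tx)) Tν).PosDef ∧
      (-((Matrix.fromBlocks (-(Tx⁻¹ * Q)) (-(Tx⁻¹ * Sᵀ)) (Tν⁻¹ * S)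
            (0 : Matrix (Fin r) (Fin r) ℝ))ᵀ *
          ((1 / 2 : ℝ) •
            Matrix.fromBlocks Tx (ε • (Tx * Sᵀ)) (ε • (S * Tx)) Tν) +
        ((1 / 2 : ℝ) •
            Matrix.fromBlocks Tx (ε • (Tx * Sᵀ)) (ε • (S * Tx)) Tν) *
          (Matrix.fromBlocks (-(Tx⁻¹ * Q)) (-(Tx⁻¹ * Sᵀ)) (Tν⁻¹ * S)
            (0 : Matrix (Fin r) (Fin r) ℝ)))).PosDef := by
  have hSS : (S * Sᵀ).PosDef := posDef_mul_transpose_of_rank_eq_card (by simpa using hS)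
  obtain ⟨ε, ⟨hP, hdP⟩, hε⟩ :=
    (((eventually_nhdsWithin_of_eventually_nhds (eventually_posDef_lyapunovCandidate S hTx hTν)).and
        (eventually_posDef_neg_lyapunovDerivative hQ hSS hTx hTν)).and self_mem_nhdsWithin).exists
  refine ⟨ε, hε, hP.smul one_half_pos, ?_⟩
  have hdP' := hdP.smul (one_half_pos (α := ℝ))
  rwa [smul_neg, ← lyapunovDerivative_smul] at hdP'

/-- There exists `ε > 0` such that
`P = (1/2)[[Tx, ε Tx Sᵀ], [ε S Tx, Tν]]` is symmetric positive definite and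
`AᵀP + PA` is negative definite, where
`A = [[−Tx⁻¹Q, −Tx⁻¹Sᵀ], [Tν⁻¹S, 0]]`. -/
theorem saddle_point_lyapunov_certificate
    (n r : ℕ) (hrn : r < n)
    (Q : Matrix (Fin n) (Fin n) ℝ) (hQ : Q.PosDef)
    (S : Matrix (Fin r) (Fin n) ℝ) (hS : S.rank = r)
    (Tx : Matrix (Fin n) (Fin n) ℝ) (hTxd : Tx.IsDiag) (hTx : Tx.PosDef)
    (Tν : Matrix (Fin r) (Fin r) ℝ) (hTνd : Tν.IsDiag) (hTν : Tν.PosDef) :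
    ∃ ε : ℝ, 0 < ε ∧
      ((1 / 2 : ℝ) •
        Matrix.fromBlocks Tx (ε • (Tx * Sᵀ)) (ε • (S * Tx)) Tν).PosDef ∧
      (-((Matrix.fromBlocks (-(Tx⁻¹ * Q)) (-(Tx⁻¹ * Sᵀ)) (Tν⁻¹ * S)
            (0 : Matrix (Fin r) (Fin r) ℝ))ᵀ *
          ((1 / 2 : ℝ) •
            Matrix.fromBlocks Tx (ε • (Tx * Sᵀ)) (ε • (S * Tx)) Tν) +
        ((1 / 2 : ℝ) •
            Matrix.fromBlocks Tx (ε • (Tx * Sᵀ)) (ε • (S * Tx)) Tν) *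
          (Matrix.fromBlocks (-(Tx⁻¹ * Q)) (-(Tx⁻¹ * Sᵀ)) (Tν⁻¹ * S)
            (0 : Matrix (Fin r) (Fin r) ℝ)))).PosDef :=
  saddle_point_lyapunov_certificate_general n r Q hQ S hS Tx hTx Tν hTν
end

section
/- Let Q ∈ ℝ^{n×n} be diagonal positive definite, let S ∈ ℝ^{r×n} have full row rank with r < n, let T_x ∈ ℝ^{n×n} and T_ν ∈ ℝ^{r×r} be diagonal positive definite, and define A = [[−T_x⁻¹Q, −T_x⁻¹Sᵀ], [T_ν⁻¹S, 0]] and C = [Q^{1/2}, 0] ∈ ℝ^{n×(n+r)}. Then the block-diagonal matrix X = (1/2)·blkdiag(T_x, T_ν) is symmetric positive definite and is the unique symmetric solution of the Lyapunov equation AᵀX + XA + CᵀC = 0. -/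
/-!
Put `T = blkdiag(Tx, Tν)`, `J = [[0, -Sᵀ], [S, 0]]` and `G = CᵀC = blkdiag(Q, 0)`. Then
`A = T⁻¹(J - G)` with `J` skew, so `TA + AᵀT = -2G`: this is the Lyapunov equation for `X = T/2`.

For uniqueness let `D` be the (symmetric) difference of two solutions and `U = T⁻¹`. Then
`GUD + DUG = DUJ - JUD`; multiplying on the right by `UDU` and taking traces, the skew part cancels
by cyclicity and what is left is `2 tr((CUD) U (CUD)ᵀ) = 0`, so `CUD = 0` and `DUJ = JUD`.
In blocks, `CUD = 0` kills the first block row of `D` because `Q` is invertible, and `DUJ = JUD`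
then reads `Sᵀ Uν D₂₂ = 0`, which kills `D₂₂` because `S` has full row rank.
-/

open Matrix

/-- The square root of a positive semidefinite matrix, as defined in the older Mathlib
(`Matrix.PosSemidef.sqrt`, removed since). -/
noncomputable def Matrix.PosSemidef.sqrt {n : Type*} [Fintype n] [DecidableEq n]
    {𝕜 : Type*} [RCLike 𝕜] [PartialOrder 𝕜] {A : Matrix n n 𝕜} (hA : A.PosSemidef) : Matrix n n 𝕜 :=
  hA.1.eigenvectorUnitary.1 * diagonal ((↑) ∘ (√·) ∘ hA.1.eigenvalues) *
  (star hA.1.eigenvectorUnitary : Matrix n n 𝕜)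

theorem Matrix.PosSemidef.transpose_sqrt {m : Type*} [Fintype m] [DecidableEq m]
    {M : Matrix m m ℝ} (hM : M.PosSemidef) : hM.sqrtᵀ = hM.sqrt := by
  simp [Matrix.PosSemidef.sqrt, transpose_mul, Matrix.mul_assoc, star_eq_conjTranspose]

theorem Matrix.PosSemidef.sqrt_mul_self {m : Type*} [Fintype m] [DecidableEq m]
    {M : Matrix m m ℝ} (hM : M.PosSemidef) : hM.sqrt * hM.sqrt = M := by
  set U : Matrix m m ℝ := (hM.1.eigenvectorUnitary : Matrix m m ℝ)
  have hU : star U * U = 1 := Unitary.coe_star_mul_self _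
  set d : m → ℝ := fun i => √(hM.1.eigenvalues i)
  have hd : diagonal d * diagonal d = diagonal hM.1.eigenvalues := by
    simp only [diagonal_mul_diagonal, d, Real.mul_self_sqrt (hM.eigenvalues_nonneg _)]
  conv_rhs => rw [hM.1.spectral_theorem, Unitary.conjStarAlgAut_apply]
  calc _ = U * (diagonal d * (star U * U) * diagonal d) * star U := by
        simp only [Matrix.PosSemidef.sqrt, Matrix.mul_assoc]; rfl
    _ = _ := by rw [hU, Matrix.mul_one, hd]; rfl

theorem Matrix.PosDef.isSymm {m : Type*} [Fintype m] {M : Matrix m m ℝ} (hM : M.PosDef) :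
    M.IsSymm :=
  isHermitian_iff_isSymm.mp hM.isHermitian

theorem Matrix.PosDef.fromBlocks_zero {m p : Type*} [Fintype m] [Fintype p] [DecidableEq m]
    [DecidableEq p] {M : Matrix m m ℝ} {N : Matrix p p ℝ} (hM : M.PosDef) (hN : N.PosDef) :
    (fromBlocks M 0 0 N).PosDef := by
  let := hM.isUnit.invertible
  have hpsd : (fromBlocks M 0 0 N).PosSemidef := by
    simpa using (PosDef.fromBlocks₁₁ 0 N hM).mpr (by simpa using hN.posSemidef)
  exact hpsd.posDef_iff_isUnit.mpr (isUnit_fromBlocks_zero₁₂.mpr ⟨hM.isUnit, hN.isUnit⟩)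

theorem Matrix.PosDef.eq_zero_of_trace_mul_mul_transpose_eq_zero {m k : Type*} [Fintype m]
    [Fintype k] {U : Matrix m m ℝ} (hU : U.PosDef) {R : Matrix k m ℝ}
    (h : (R * U * Rᵀ).trace = 0) : R = 0 := by
  have hRUR : R * U * Rᵀ = 0 :=
    (hU.posSemidef.mul_mul_conjTranspose_same R).trace_eq_zero_iff.mp h
  ext i j
  by_contra hne
  have hRi : R i ≠ 0 := fun h0 => hne (by simp [h0])
  have hzero : R i ⬝ᵥ U *ᵥ R i = 0 := by
    have hii := congrFun (congrFun hRUR i) i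
    rw [Matrix.mul_assoc] at hii
    simpa [mul_apply, dotProduct, mulVec] using hii
  simpa [hzero] using hU.dotProduct_mulVec_pos hRi

theorem Matrix.eq_zero_of_rank_eq_zero {m k : Type*} [Fintype k] {N : Matrix m k ℝ}
    (h : N.rank = 0) : N = 0 := by
  classical
  rw [Matrix.rank, Submodule.finrank_eq_zero, LinearMap.range_eq_bot] at h
  ext i j
  simpa using congrFun (LinearMap.congr_fun h (Pi.single j 1)) i

theorem Matrix.eq_zero_of_transpose_mul_eq_zero {m p k : Type*} [Fintype m] [Fintype p]
    [Fintype k] {S : Matrix p m ℝ} (hS : S.rank = Fintype.card p) {N : Matrix p k ℝ}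
    (h : Sᵀ * N = 0) : N = 0 := by
  have := rank_add_rank_le_card_of_mul_eq_zero h
  rw [rank_transpose, hS] at this
  exact eq_zero_of_rank_eq_zero (by omega)

theorem Matrix.eq_zero_of_isUnit_mul_eq_zero {m k : Type*} [Fintype m] [DecidableEq m]
    {M : Matrix m m ℝ} (hM : IsUnit M) {N : Matrix m k ℝ} (h : M * N = 0) : N = 0 := by
  let := hM.invertible
  exact mul_right_injective_of_invertible M (by simpa using h)

section Lyapunov

variable {ι k : Type*} [Fintype ι] [Fintype k]

theorem lyapunov_half_of_eq_inv_mul_sub [DecidableEq ι] {T J G A : Matrix ι ι ℝ}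
    (hT : T.PosDef) (hJ : Jᵀ = -J) (hG : G.IsSymm) (hA : A = T⁻¹ * (J - G)) :
    Aᵀ * ((1 / 2 : ℝ) • T) + ((1 / 2 : ℝ) • T) * A + G = 0 := by
  have hTA : T * A = J - G := by
    rw [hA, mul_nonsing_inv_cancel_left _ _ ((isUnit_iff_isUnit_det _).mp hT.isUnit)]
  have hAT : Aᵀ * T = -J - G := by
    rw [← hT.isSymm.eq, ← transpose_mul, hTA, transpose_sub, hJ, hG.eq]
  rw [Matrix.mul_smul, Matrix.smul_mul, hTA, hAT]
  module

variable {U J G A D : Matrix ι ι ℝ}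

theorem dissipation_eq_skew_part_of_lyapunov_homogeneous (hU : U.IsSymm) (hJ : Jᵀ = -J)
    (hG : G.IsSymm) (hA : A = U * (J - G)) (h : Aᵀ * D + D * A = 0) :
    G * U * D + D * U * G = D * U * J - J * U * D := by
  subst hA
  rw [transpose_mul, transpose_sub, hU.eq, hJ, hG.eq] at h
  rw [← sub_eq_zero, ← neg_eq_zero, ← h]
  noncomm_ring

theorem mul_mul_eq_zero_of_lyapunov_homogeneous {C : Matrix k ι ℝ} (hU : U.PosDef)
    (hD : D.IsSymm) (h : Cᵀ * C * U * D + D * U * (Cᵀ * C) = D * U * J - J * U * D) :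
    C * U * D = 0 := by
  have cycle : ∀ M : Matrix ι ι ℝ,
      trace (D * U * M * (U * D * U)) = trace (M * (U * D * U) * (D * U)) := fun M => by
    rw [Matrix.mul_assoc (D * U), trace_mul_comm]
  have hgram : trace (C * U * D * U * (C * U * D)ᵀ) =
      trace (Cᵀ * (C * (U * (D * (U * (D * U)))))) := by
    rw [transpose_mul, transpose_mul, hD.eq, hU.isSymm.eq, trace_mul_comm Cᵀ]
    simp only [Matrix.mul_assoc]
  have htrace : trace ((Cᵀ * C * U * D + D * U * (Cᵀ * C)) * (U * D * U)) =
      trace ((D * U * J - J * U * D) * (U * D * U)) := by rw [h]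
  rw [Matrix.add_mul, Matrix.sub_mul, trace_add, trace_sub, cycle, cycle] at htrace
  simp only [Matrix.mul_assoc, sub_self] at htrace
  apply hU.eq_zero_of_trace_mul_mul_transpose_eq_zero
  linarith

theorem commute_of_lyapunov_homogeneous {C : Matrix k ι ℝ} (hU : U.IsSymm) (hD : D.IsSymm)
    (h : Cᵀ * C * U * D + D * U * (Cᵀ * C) = D * U * J - J * U * D) (hCUD : C * U * D = 0) :
    D * U * J = J * U * D := by
  have hleft : Cᵀ * C * U * D = 0 := by
    rw [Matrix.mul_assoc Cᵀ, Matrix.mul_assoc Cᵀ, hCUD, Matrix.mul_zero]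
  have hright : D * U * (Cᵀ * C) = 0 := by
    simpa [transpose_mul, hD.eq, hU.eq, Matrix.mul_assoc] using congrArg transpose hleft
  rw [hleft, hright, zero_add, eq_comm, sub_eq_zero] at h
  exact h

end Lyapunov

theorem eq_zero_of_saddle_point_blocks {m p : Type*} [Fintype m] [Fintype p] [DecidableEq m]
    [DecidableEq p] {Q Ux : Matrix m m ℝ} {Uν : Matrix p p ℝ} {S : Matrix p m ℝ}
    {D : Matrix (m ⊕ p) (m ⊕ p) ℝ} (hQ : IsUnit Q) (hUx : IsUnit Ux) (hUν : IsUnit Uν)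
    (hS : S.rank = Fintype.card p) (hD : D.IsSymm)
    (hG : fromBlocks Q 0 0 0 * fromBlocks Ux 0 0 Uν * D = 0)
    (hJ : D * fromBlocks Ux 0 0 Uν * fromBlocks 0 (-Sᵀ) S 0 =
      fromBlocks 0 (-Sᵀ) S 0 * fromBlocks Ux 0 0 Uν * D) :
    D = 0 := by
  obtain ⟨D₁, D₂, D₃, D₄, rfl⟩ : ∃ D₁ D₂ D₃ D₄, D = fromBlocks D₁ D₂ D₃ D₄ :=
    ⟨_, _, _, _, (fromBlocks_toBlocks D).symm⟩
  simp only [fromBlocks_multiply, Matrix.zero_mul, Matrix.mul_zero, add_zero, zero_add] at hG hJ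
  rw [← fromBlocks_zero, fromBlocks_inj] at hG
  obtain ⟨hD₁, hD₂, -, -⟩ := hG
  rw [Matrix.mul_assoc] at hD₁ hD₂
  obtain rfl := eq_zero_of_isUnit_mul_eq_zero hUx (eq_zero_of_isUnit_mul_eq_zero hQ hD₁)
  obtain rfl := eq_zero_of_isUnit_mul_eq_zero hUx (eq_zero_of_isUnit_mul_eq_zero hQ hD₂)
  rw [IsSymm, fromBlocks_transpose, fromBlocks_inj] at hD
  obtain rfl : D₃ = 0 := transpose_eq_zero.mp hD.2.1
  simp only [Matrix.zero_mul, Matrix.mul_zero] at hJ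
  rw [fromBlocks_inj] at hJ
  have hSD₄ : Sᵀ * (Uν * D₄) = 0 := by simpa [Matrix.mul_assoc] using hJ.2.1.symm
  obtain rfl := eq_zero_of_isUnit_mul_eq_zero hUν (eq_zero_of_transpose_mul_eq_zero hS hSD₄)
  exact fromBlocks_zero

theorem Matrix.inv_fromBlocks_zero_zero {m p : Type*} [Fintype m] [Fintype p] [DecidableEq m]
    [DecidableEq p] {M : Matrix m m ℝ} {N : Matrix p p ℝ} (hM : IsUnit M) (hN : IsUnit N) :
    (fromBlocks M 0 0 N)⁻¹ = fromBlocks M⁻¹ 0 0 N⁻¹ := by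
  simpa using inv_fromBlocks_zero₁₂_of_isUnit_iff M 0 N (iff_of_true hM hN)

theorem Matrix.PosSemidef.transpose_fromCols_sqrt_mul {m p : Type*} [Fintype m] [DecidableEq m]
    {Q : Matrix m m ℝ} (hQ : Q.PosSemidef) :
    (fromCols hQ.sqrt (0 : Matrix m p ℝ))ᵀ * fromCols hQ.sqrt 0 =
      fromBlocks Q 0 0 (0 : Matrix p p ℝ) := by
  rw [transpose_fromCols, fromRows_mul_fromCols, hQ.transpose_sqrt, hQ.sqrt_mul_self]
  simp

theorem saddle_point_observability_gramian_general
    (n r : ℕ)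
    (Q : Matrix (Fin n) (Fin n) ℝ) (hQ : Q.PosDef)
    (S : Matrix (Fin r) (Fin n) ℝ) (hS : S.rank = r)
    (Tx : Matrix (Fin n) (Fin n) ℝ) (hTx : Tx.PosDef)
    (Tν : Matrix (Fin r) (Fin r) ℝ) (hTν : Tν.PosDef)
    (A : Matrix (Fin n ⊕ Fin r) (Fin n ⊕ Fin r) ℝ)
    (hA : A = Matrix.fromBlocks (-(Tx⁻¹ * Q)) (-(Tx⁻¹ * Sᵀ)) (Tν⁻¹ * S) 0)
    (C : Matrix (Fin n) (Fin n ⊕ Fin r) ℝ)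
    (hC : C = Matrix.fromCols hQ.posSemidef.sqrt 0)
    (X : Matrix (Fin n ⊕ Fin r) (Fin n ⊕ Fin r) ℝ)
    (hX : X = (1 / 2 : ℝ) • Matrix.fromBlocks Tx 0 0 Tν) :
    X.PosDef ∧ Aᵀ * X + X * A + Cᵀ * C = 0 ∧
      ∀ Y : Matrix (Fin n ⊕ Fin r) (Fin n ⊕ Fin r) ℝ,
        Y.IsSymm → Aᵀ * Y + Y * A + Cᵀ * C = 0 → Y = X := by
  set T := fromBlocks Tx 0 0 Tν
  set J : Matrix (Fin n ⊕ Fin r) (Fin n ⊕ Fin r) ℝ := fromBlocks 0 (-Sᵀ) S 0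
  have hT : T.PosDef := hTx.fromBlocks_zero hTν
  have hTinv : T⁻¹ = fromBlocks Tx⁻¹ 0 0 Tν⁻¹ := inv_fromBlocks_zero_zero hTx.isUnit hTν.isUnit
  have hCC : Cᵀ * C = fromBlocks Q 0 0 0 := hC ▸ hQ.posSemidef.transpose_fromCols_sqrt_mul
  have hG : (Cᵀ * C).IsSymm := by simp [IsSymm, transpose_mul]
  have hJ : Jᵀ = -J := by simp [J, fromBlocks_transpose, fromBlocks_neg]
  have hAJG : A = T⁻¹ * (J - Cᵀ * C) := by
    rw [hA, hTinv, hCC]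
    simp [J, sub_eq_add_neg, fromBlocks_neg, fromBlocks_add, fromBlocks_multiply]
  have hLyap : Aᵀ * X + X * A + Cᵀ * C = 0 := hX ▸ lyapunov_half_of_eq_inv_mul_sub hT hJ hG hAJG
  refine ⟨hX ▸ hT.smul (by norm_num), hLyap, fun Y hY hYeq => ?_⟩
  have hD : (Y - X).IsSymm := hY.sub (hX ▸ hT.isSymm.smul _)
  have hhom : Aᵀ * (Y - X) + (Y - X) * A = 0 := by
    calc _ = (Aᵀ * Y + Y * A + Cᵀ * C) - (Aᵀ * X + X * A + Cᵀ * C) := by noncomm_ring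
      _ = 0 := by rw [hYeq, hLyap, sub_zero]
  have hsplit := dissipation_eq_skew_part_of_lyapunov_homogeneous hT.inv.isSymm hJ hG hAJG hhom
  have hCUD := mul_mul_eq_zero_of_lyapunov_homogeneous hT.inv hD hsplit
  have hcomm := commute_of_lyapunov_homogeneous hT.inv.isSymm hD hsplit hCUD
  rw [hTinv] at hCUD hcomm
  refine sub_eq_zero.mp (eq_zero_of_saddle_point_blocks hQ.isUnit hTx.inv.isUnit hTν.inv.isUnit
    (by simpa using hS) hD ?_ hcomm)
  rw [← hCC, Matrix.mul_assoc Cᵀ, Matrix.mul_assoc Cᵀ, hCUD, Matrix.mul_zero]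

/-- `X = (1/2)·blkdiag(Tx, Tν)` is symmetric positive definite and is
the unique symmetric solution of the Lyapunov equation `AᵀX + XA + CᵀC = 0`, where
`A = [[−Tx⁻¹Q, −Tx⁻¹Sᵀ], [Tν⁻¹S, 0]]` and `C = [Q^{1/2}, 0]`. -/
theorem saddle_point_observability_gramian
    (n r : ℕ) (hrn : r < n)
    (Q : Matrix (Fin n) (Fin n) ℝ) (hQd : Q.IsDiag) (hQ : Q.PosDef)
    (S : Matrix (Fin r) (Fin n) ℝ) (hS : S.rank = r)
    (Tx : Matrix (Fin n) (Fin n) ℝ) (hTxd : Tx.IsDiag) (hTx : Tx.PosDef)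
    (Tν : Matrix (Fin r) (Fin r) ℝ) (hTνd : Tν.IsDiag) (hTν : Tν.PosDef)
    (A : Matrix (Fin n ⊕ Fin r) (Fin n ⊕ Fin r) ℝ)
    (hA : A = Matrix.fromBlocks (-(Tx⁻¹ * Q)) (-(Tx⁻¹ * Sᵀ)) (Tν⁻¹ * S) 0)
    (C : Matrix (Fin n) (Fin n ⊕ Fin r) ℝ)
    (hC : C = Matrix.fromCols hQ.posSemidef.sqrt 0)
    (X : Matrix (Fin n ⊕ Fin r) (Fin n ⊕ Fin r) ℝ)
    (hX : X = (1 / 2 : ℝ) • Matrix.fromBlocks Tx 0 0 Tν) :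
    X.PosDef ∧ Aᵀ * X + X * A + Cᵀ * C = 0 ∧
      ∀ Y : Matrix (Fin n ⊕ Fin r) (Fin n ⊕ Fin r) ℝ,
        Y.IsSymm → Aᵀ * Y + Y * A + Cᵀ * C = 0 → Y = X :=
  saddle_point_observability_gramian_general n r Q hQ S hS Tx hTx Tν hTν A hA C hC X hX
end

section
/- Let n ≥ 1, let q, τ̄_x, τ̄_ν, ε, t_c, t_b be positive reals, and let S ∈ ℝ^{1×n} be a nonzero row vector with s = ‖S‖₂. Set Q = q·I_n, A_reg = [[−(q/τ̄_x) I_n, −(1/τ̄_x) Sᵀ], [(1/τ̄_ν) S, −ε/τ̄_ν]], B = [[(t_c/τ̄_x) I_n, 0], [0, t_b/τ̄_ν]], C = [√q·I_n, 0], and X = (1/2)·blkdiag(τ̄_x I_n, τ̄_ν). Let X_ε be the unique symmetric solution of A_regᵀ X_ε + X_ε A_reg + CᵀC = 0. Then Tr(BᵀXB) − Tr(Bᵀ X_ε B) = α_ε t_c² + γ_ε t_b², where α_ε = ε s² / (2(εq + s²)(ε τ̄_x + q τ̄_ν)) and γ_ε = ε(τ̄_x q ε + q² τ̄_ν + τ̄_x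 s²) / (2 τ̄_ν (εq + s²)(ε τ̄_x + q τ̄_ν)). -/
open Matrix

/-!
Write the symmetric solution as `X_ε = [[P, p], [pᵀ, W]]`. As `B` is block diagonal with scalar
blocks, `Tr(Bᵀ X_ε B)` only sees `tr P` and `W`. Because `Q = q I` and `S` is a single row, the
functionals `M ↦ tr M₁₁`, `S M₁₁ Sᵀ`, `S M₁₂` and `M₂₂` turn the Lyapunov equation into a closed
linear system for the four scalars `tr P`, `S p`, `S P Sᵀ` and `W`, whose coefficients involve `S`
only through `s² = S Sᵀ`; solving it gives `tr P` and `W` explicitly.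
-/

namespace Matrix

variable {m k : Type*}

theorem IsSymm.eq_fromBlocks {α : Type*} {X : Matrix (m ⊕ k) (m ⊕ k) α} (hX : X.IsSymm) :
    X = Matrix.fromBlocks X.toBlocks₁₁ X.toBlocks₁₂ X.toBlocks₁₂ᵀ X.toBlocks₂₂ := by
  conv_lhs => rw [← fromBlocks_toBlocks X]
  congr
  ext i j
  exact hX.apply (Sum.inl j) (Sum.inr i)

variable [Fintype m] [Fintype k]

theorem trace_fromBlocks {α : Type*} [AddCommMonoid α] (A : Matrix m m α) (B : Matrix m k α)
    (C : Matrix k m α) (D : Matrix k k α) : (fromBlocks A B C D).trace = A.trace + D.trace := by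
  simp [trace, Fintype.sum_sum_type]

theorem trace_transpose_fromBlocks_smul_one_mul_mul {R : Type*} [CommRing R] [DecidableEq m]
    [DecidableEq k] (a b : R) (M : Matrix (m ⊕ k) (m ⊕ k) R) :
    ((fromBlocks (a • 1) 0 0 (b • 1))ᵀ * M * fromBlocks (a • 1) 0 0 (b • 1)).trace =
      a ^ 2 * M.toBlocks₁₁.trace + b ^ 2 * M.toBlocks₂₂.trace := by
  rw [← fromBlocks_toBlocks M]
  simp only [fromBlocks_transpose, fromBlocks_multiply, trace_fromBlocks, transpose_smul,
    transpose_one, transpose_zero, Matrix.smul_mul, Matrix.mul_smul, Matrix.one_mul,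
    Matrix.mul_one, Matrix.zero_mul, Matrix.mul_zero, add_zero, zero_add,
    toBlocks_fromBlocks₁₁, toBlocks_fromBlocks₂₂, trace_smul, smul_eq_mul]
  ring

theorem trace_mul_transpose_self_nonneg (S : Matrix m k ℝ) : 0 ≤ (S * Sᵀ).trace := by
  simpa [conjTranspose_eq_transpose_of_trivial] using
    (posSemidef_self_mul_conjTranspose S).trace_nonneg

theorem trace_mul_fin_one {R : Type*} [CommRing R] (M N : Matrix (Fin 1) (Fin 1) R) :
    (M * N).trace = M.trace * N.trace := by
  simp only [trace_fin_one, ← det_fin_one, det_mul]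

end Matrix

theorem regularizedSaddle_trace_system_solution {q τx τν ε σ N T u v w : ℝ} (hq : 0 < q)
    (hτx : 0 < τx) (hτν : 0 < τν) (hε : 0 < ε) (hσ : 0 ≤ σ)
    (h1 : 2 * q * τν * T = 2 * τx * u + q * τx * τν * N)
    (h2 : 2 * q * τν * v = 2 * τx * σ * u + q * τx * τν * σ)
    (h3 : τx * σ * w = τν * v + (q * τν + ε * τx) * u)
    (h4 : τν * u + ε * τx * w = 0) :
    T = τx * N / 2 - ε * σ * τx ^ 2 / (2 * (ε * q + σ) * (ε * τx + q * τν)) ∧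
      w = q * σ * τν ^ 2 / (2 * (ε * q + σ) * (ε * τx + q * τν)) := by
  have hD : 2 * (ε * q + σ) * (ε * τx + q * τν) ≠ 0 := by positivity
  have hu : u = -(ε * q * σ * τx * τν) / (2 * (ε * q + σ) * (ε * τx + q * τν)) := by
    rw [eq_div_iff hD]
    linear_combination (-ε) * h2 + (-2 * q * ε) * h3 + (2 * q * σ) * h4
  constructor
  · rw [eq_sub_iff_add_eq, ← mul_right_inj' (by positivity : 2 * q * τν ≠ 0), mul_add, h1, hu]
    field_simp
    ring
  · rw [← mul_right_inj' (by positivity : ε * τx ≠ 0), eq_neg_of_add_eq_zero_right h4, hu]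
    field_simp

section RegularizedSaddle

variable {ι : Type*} [Fintype ι] [DecidableEq ι] (q τx τν ε : ℝ) (S : Matrix (Fin 1) ι ℝ)

noncomputable def regularizedSaddleMatrix : Matrix (ι ⊕ Fin 1) (ι ⊕ Fin 1) ℝ :=
  fromBlocks ((-(q / τx)) • 1) ((-(1 / τx)) • Sᵀ) ((1 / τν) • S) ((-(ε / τν)) • 1)

variable {q τx τν ε S}

theorem regularizedSaddleMatrix_lyapunov_blocks (hτx : τx ≠ 0) (hτν : τν ≠ 0)
    {P : Matrix ι ι ℝ} {p : Matrix ι (Fin 1) ℝ} {W : Matrix (Fin 1) (Fin 1) ℝ}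
    (h : (regularizedSaddleMatrix q τx τν ε S)ᵀ * fromBlocks P p pᵀ W
      + fromBlocks P p pᵀ W * regularizedSaddleMatrix q τx τν ε S + fromBlocks (q • 1) 0 0 0 = 0) :
    τx • (Sᵀ * pᵀ + p * S) + (q * τx * τν) • 1 = (2 * q * τν) • P ∧
    τx • (Sᵀ * W) = τν • (P * Sᵀ) + (q * τν + ε * τx) • p ∧
    τν • (S * p + pᵀ * Sᵀ) + (2 * ε * τx) • W = 0 := by
  rw [← fromBlocks_zero] at h
  simp only [regularizedSaddleMatrix, fromBlocks_transpose, fromBlocks_multiply, fromBlocks_add,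
    fromBlocks_inj, transpose_smul, transpose_one, transpose_transpose, Matrix.smul_mul,
    Matrix.mul_smul, Matrix.one_mul, Matrix.mul_one] at h
  obtain ⟨h11, h12, -, h22⟩ := h
  refine ⟨?_, ?_, ?_⟩
  · linear_combination (norm := match_scalars) (τx * τν) • h11 <;> field_simp <;> ring
  · linear_combination (norm := match_scalars) (τx * τν) • h12 <;> field_simp <;> ring
  · linear_combination (norm := match_scalars) (-(τx * τν)) • h22 <;> field_simp <;> ring

theorem regularizedSaddleMatrix_lyapunov_traces (hτx : τx ≠ 0) (hτν : τν ≠ 0)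
    {P : Matrix ι ι ℝ} {p : Matrix ι (Fin 1) ℝ} {W : Matrix (Fin 1) (Fin 1) ℝ}
    (h : (regularizedSaddleMatrix q τx τν ε S)ᵀ * fromBlocks P p pᵀ W
      + fromBlocks P p pᵀ W * regularizedSaddleMatrix q τx τν ε S + fromBlocks (q • 1) 0 0 0 = 0) :
    2 * q * τν * P.trace = 2 * τx * (S * p).trace + q * τx * τν * Fintype.card ι ∧
    2 * q * τν * (S * P * Sᵀ).trace =
      2 * τx * (S * Sᵀ).trace * (S * p).trace + q * τx * τν * (S * Sᵀ).trace ∧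
    τx * (S * Sᵀ).trace * W.trace = τν * (S * P * Sᵀ).trace + (q * τν + ε * τx) * (S * p).trace ∧
    τν * (S * p).trace + ε * τx * W.trace = 0 := by
  obtain ⟨h11, h12, h22⟩ := regularizedSaddleMatrix_lyapunov_blocks hτx hτν h
  have hSp : (Sᵀ * pᵀ).trace = (S * p).trace := by
    rw [← transpose_mul, trace_transpose, trace_mul_comm]
  have hpS : (pᵀ * Sᵀ).trace = (S * p).trace := by
    rw [← transpose_mul, trace_transpose]
  refine ⟨?_, ?_, ?_, ?_⟩
  · have := congrArg trace h11
    simp only [trace_add, trace_smul, trace_one, smul_eq_mul, hSp, trace_mul_comm p S] at this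
    linear_combination -this
  · have := congrArg (fun M => (S * M * Sᵀ).trace) h11
    simp only [Matrix.mul_add, Matrix.add_mul, Matrix.mul_smul, Matrix.smul_mul, Matrix.mul_one,
      trace_add, trace_smul, smul_eq_mul] at this
    rw [← Matrix.mul_assoc, Matrix.mul_assoc (S * Sᵀ), ← transpose_mul, trace_mul_fin_one,
      trace_transpose, ← Matrix.mul_assoc, Matrix.mul_assoc (S * p), trace_mul_fin_one] at this
    linear_combination -this
  · have := congrArg (fun M => (S * M).trace) h12
    simp only [Matrix.mul_add, Matrix.mul_smul, trace_add, trace_smul, smul_eq_mul] at this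
    rw [← Matrix.mul_assoc, trace_mul_fin_one, ← Matrix.mul_assoc] at this
    linear_combination this
  · have := congrArg trace h22
    simp only [trace_add, trace_smul, trace_zero, smul_eq_mul, hpS] at this
    linear_combination this / 2

theorem regularizedSaddleMatrix_lyapunov_trace_toBlocks (hq : 0 < q) (hτx : 0 < τx)
    (hτν : 0 < τν) (hε : 0 < ε) {Y : Matrix (ι ⊕ Fin 1) (ι ⊕ Fin 1) ℝ} (hY : Y.IsSymm)
    (h : (regularizedSaddleMatrix q τx τν ε S)ᵀ * Y + Y * regularizedSaddleMatrix q τx τν ε S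
      + fromBlocks (q • 1) 0 0 0 = 0) :
    Y.toBlocks₁₁.trace = τx * Fintype.card ι / 2 -
        ε * (S * Sᵀ).trace * τx ^ 2 / (2 * (ε * q + (S * Sᵀ).trace) * (ε * τx + q * τν)) ∧
      Y.toBlocks₂₂.trace =
        q * (S * Sᵀ).trace * τν ^ 2 / (2 * (ε * q + (S * Sᵀ).trace) * (ε * τx + q * τν)) := by
  rw [hY.eq_fromBlocks] at h
  obtain ⟨h1, h2, h3, h4⟩ := regularizedSaddleMatrix_lyapunov_traces hτx.ne' hτν.ne' h
  exact regularizedSaddle_trace_system_solution hq hτx hτν hε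
    (trace_mul_transpose_self_nonneg S) h1 h2 h3 h4

end RegularizedSaddle

theorem regularized_saddle_point_performance_gap_general
    (n : ℕ)
    (q τx τν ε tc tb : ℝ)
    (hq : 0 < q) (hτx : 0 < τx) (hτν : 0 < τν) (hε : 0 < ε)
    (S : Matrix (Fin 1) (Fin n) ℝ)
    (s : ℝ) (hs : s = Real.sqrt ((S * Sᵀ).trace))
    (Areg : Matrix (Fin n ⊕ Fin 1) (Fin n ⊕ Fin 1) ℝ)
    (hAreg : Areg = Matrix.fromBlocks
      ((-(q / τx)) • (1 : Matrix (Fin n) (Fin n) ℝ)) ((-(1 / τx)) • Sᵀ)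
      ((1 / τν) • S) ((-(ε / τν)) • (1 : Matrix (Fin 1) (Fin 1) ℝ)))
    (B : Matrix (Fin n ⊕ Fin 1) (Fin n ⊕ Fin 1) ℝ)
    (hB : B = Matrix.fromBlocks
      ((tc / τx) • (1 : Matrix (Fin n) (Fin n) ℝ)) 0
      0 ((tb / τν) • (1 : Matrix (Fin 1) (Fin 1) ℝ)))
    (C : Matrix (Fin n) (Fin n ⊕ Fin 1) ℝ)
    (hC : C = Matrix.fromCols
      (Real.sqrt q • (1 : Matrix (Fin n) (Fin n) ℝ)) 0)
    (X : Matrix (Fin n ⊕ Fin 1) (Fin n ⊕ Fin 1) ℝ)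
    (hX : X = (1 / 2 : ℝ) • Matrix.fromBlocks
      (τx • (1 : Matrix (Fin n) (Fin n) ℝ)) 0
      0 (τν • (1 : Matrix (Fin 1) (Fin 1) ℝ)))
    (Xε : Matrix (Fin n ⊕ Fin 1) (Fin n ⊕ Fin 1) ℝ)
    (hXεsymm : Xε.IsSymm)
    (hXε : Aregᵀ * Xε + Xε * Areg + Cᵀ * C = 0) :
    (Bᵀ * X * B).trace - (Bᵀ * Xε * B).trace =
      (ε * s ^ 2 / (2 * (ε * q + s ^ 2) * (ε * τx + q * τν))) * tc ^ 2 +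
      (ε * (τx * q * ε + q ^ 2 * τν + τx * s ^ 2) /
        (2 * τν * (ε * q + s ^ 2) * (ε * τx + q * τν))) * tb ^ 2 := by
  have hCC : Cᵀ * C = fromBlocks (q • 1) 0 0 0 := by
    rw [hC, transpose_fromCols, fromRows_mul_fromCols]
    simp [smul_smul, Real.mul_self_sqrt hq.le]
  rw [show Areg = regularizedSaddleMatrix q τx τν ε S from hAreg, hCC] at hXε
  obtain ⟨hP, hW⟩ := regularizedSaddleMatrix_lyapunov_trace_toBlocks hq hτx hτν hε hXεsymm hXε
  have hs2 : s ^ 2 = (S * Sᵀ).trace := hs ▸ Real.sq_sqrt (trace_mul_transpose_self_nonneg S)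
  rw [← hs2] at hP hW
  rw [hB, hX, trace_transpose_fromBlocks_smul_one_mul_mul,
    trace_transpose_fromBlocks_smul_one_mul_mul, hP, hW]
  simp only [fromBlocks_smul, smul_zero, toBlocks_fromBlocks₁₁, toBlocks_fromBlocks₂₂, trace_smul,
    trace_one, Fintype.card_fin, Fintype.card_unique, smul_eq_mul]
  have : 0 < ε * q + s ^ 2 := by positivity
  field_simp
  ring

/-- single-constraint, uniform parameters. With
`X = (1/2)·blkdiag(τx I_n, τν)` the unregularized Gramian and `X_ε` the unique
symmetric solution of the regularized Lyapunov equation,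
`Tr(BᵀXB) − Tr(Bᵀ X_ε B) = α_ε t_c² + γ_ε t_b²`. -/
theorem regularized_saddle_point_performance_gap
    (n : ℕ) (hn : 1 ≤ n)
    (q τx τν ε tc tb : ℝ)
    (hq : 0 < q) (hτx : 0 < τx) (hτν : 0 < τν) (hε : 0 < ε)
    (htc : 0 < tc) (htb : 0 < tb)
    (S : Matrix (Fin 1) (Fin n) ℝ) (hSne : S ≠ 0)
    (s : ℝ) (hs : s = Real.sqrt ((S * Sᵀ).trace))
    (Areg : Matrix (Fin n ⊕ Fin 1) (Fin n ⊕ Fin 1) ℝ)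
    (hAreg : Areg = Matrix.fromBlocks
      ((-(q / τx)) • (1 : Matrix (Fin n) (Fin n) ℝ)) ((-(1 / τx)) • Sᵀ)
      ((1 / τν) • S) ((-(ε / τν)) • (1 : Matrix (Fin 1) (Fin 1) ℝ)))
    (B : Matrix (Fin n ⊕ Fin 1) (Fin n ⊕ Fin 1) ℝ)
    (hB : B = Matrix.fromBlocks
      ((tc / τx) • (1 : Matrix (Fin n) (Fin n) ℝ)) 0
      0 ((tb / τν) • (1 : Matrix (Fin 1) (Fin 1) ℝ)))
    (C : Matrix (Fin n) (Fin n ⊕ Fin 1) ℝ)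
    (hC : C = Matrix.fromCols
      (Real.sqrt q • (1 : Matrix (Fin n) (Fin n) ℝ)) 0)
    (X : Matrix (Fin n ⊕ Fin 1) (Fin n ⊕ Fin 1) ℝ)
    (hX : X = (1 / 2 : ℝ) • Matrix.fromBlocks
      (τx • (1 : Matrix (Fin n) (Fin n) ℝ)) 0
      0 (τν • (1 : Matrix (Fin 1) (Fin 1) ℝ)))
    (Xε : Matrix (Fin n ⊕ Fin 1) (Fin n ⊕ Fin 1) ℝ)
    (hXεsymm : Xε.IsSymm)
    (hXε : Aregᵀ * Xε + Xε * Areg + Cᵀ * C = 0) :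
    (Bᵀ * X * B).trace - (Bᵀ * Xε * B).trace =
      (ε * s ^ 2 / (2 * (ε * q + s ^ 2) * (ε * τx + q * τν))) * tc ^ 2 +
      (ε * (τx * q * ε + q ^ 2 * τν + τx * s ^ 2) /
        (2 * τν * (ε * q + s ^ 2) * (ε * τx + q * τν))) * tb ^ 2 :=
  regularized_saddle_point_performance_gap_general n q τx τν ε tc tb hq hτx hτν hε S s hs Areg hAreg
    B hB C hC X hX Xε hXεsymm hXε
end

section
/- Let Q ∈ ℝ^{n×n} be symmetric positive definite, let S ∈ ℝ^{r×n} have full row rank with r ≤ n, let W_b ∈ ℝ^{r×m}, let T_ν ∈ ℝ^{r×r} be diagonal positive definite, and let t_b ≥ 0. Define A_dual = −T_ν⁻¹ S Q⁻¹ Sᵀ, B_dual = t_b T_ν⁻¹ W_b, and C_dual = −Q^{−1/2} Sᵀ. Then X = (1/2) T_ν is the unique symmetric solution of the Lyapunov equation A_dualᵀ X + X A_dual + C_dualᵀ C_dual = 0, and Tr(B_dualᵀ X B_dual) = (t_b²/2)·Tr(W_bᵀ T_ν⁻¹ W_b). That is, the squared H₂ norm of the input-output dual ascent dynamics equals (t_b²/2)·Tr(W_bᵀ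 T_ν⁻¹ W_b). -/
/-!
With `M = S Q⁻¹ Sᵀ` one has `A = -T⁻¹ M` and `CᵀC = M`, so `X = T/2` solves the Lyapunov equation
by inspection, and the trace identity reduces to `(T⁻¹W)ᵀ T (T⁻¹W) = Wᵀ T⁻¹ W`. Full row rank of
`S` makes `M` positive definite. The difference `D` of two symmetric solutions satisfies
`M T⁻¹ D + D T⁻¹ M = 0`; conjugating by `L = √(T⁻¹)` turns this into `M' E + E M' = 0` with
`M' = L M L` positive definite and `E = L D L` symmetric. Multiplying by `E` and taking traces gives
`2 tr (E M' E) = 0`, so `√M' E = 0` and hence `E = 0`.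
-/

open Matrix
open scoped MatrixOrder

namespace Matrix

variable {ι κ : Type*} [Fintype ι] [Fintype κ]

lemma vecMul_injective_of_rank_eq_card {S : Matrix κ ι ℝ}
    (hS : S.rank = Fintype.card κ) : Function.Injective S.vecMul := by
  rw [vecMul_injective_iff, linearIndependent_iff_card_eq_finrank_span, Set.finrank,
    ← rank_eq_finrank_span_row, hS]

variable [DecidableEq ι]

lemma PosDef.mul_inv_mul_transpose {Q : Matrix ι ι ℝ} (hQ : Q.PosDef)
    {S : Matrix κ ι ℝ} (hS : S.rank = Fintype.card κ) : (S * Q⁻¹ * Sᵀ).PosDef :=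
  hQ.inv.mul_mul_conjTranspose_same (vecMul_injective_of_rank_eq_card hS)

lemma transpose_sqrt (A : Matrix ι ι ℝ) : (CFC.sqrt A)ᵀ = CFC.sqrt A := by
  rw [← conjTranspose_eq_transpose_of_trivial]
  exact (CFC.sqrt_nonneg A).posSemidef.isHermitian.eq

lemma PosDef.transpose_inv_sqrt_mul_inv_sqrt {Q : Matrix ι ι ℝ} (hQ : Q.PosDef) :
    (CFC.sqrt Q)⁻¹ᵀ * (CFC.sqrt Q)⁻¹ = Q⁻¹ := by
  rw [hQ.posSemidef.inv_sqrt, transpose_sqrt, CFC.sqrt_mul_sqrt_self _ hQ.inv.posSemidef.nonneg]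

lemma PosDef.eq_zero_of_mul_add_mul_eq_zero {M E : Matrix ι ι ℝ} (hM : M.PosDef) (hE : E.IsSymm)
    (h : M * E + E * M = 0) : E = 0 := by
  set L := CFC.sqrt M
  have hLL : L * L = M := CFC.sqrt_mul_sqrt_self M hM.posSemidef.nonneg
  have hLt : Lᵀ = L := transpose_sqrt M
  have htr : ((L * E)ᴴ * (L * E)).trace = 0 := by
    have h2 : E * M * E + E * E * M = 0 := by
      simpa only [mul_add, mul_assoc, mul_zero] using congrArg (E * ·) h
    have h3 : (E * E * M).trace = (E * M * E).trace := by
      rw [mul_assoc, trace_mul_comm, mul_assoc]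
    have h4 := congrArg trace h2
    rw [trace_add, trace_zero, h3] at h4
    rw [conjTranspose_eq_transpose_of_trivial, transpose_mul, hLt, hE.eq, mul_assoc,
      ← mul_assoc L, hLL, ← mul_assoc]
    linarith
  have hME : M * E = 0 := by
    rw [← hLL, mul_assoc, trace_conjTranspose_mul_self_eq_zero_iff.mp htr, mul_zero]
  simpa [hM.isUnit.mul_right_eq_zero] using hME

lemma PosDef.eq_zero_of_mul_mul_add_mul_mul_eq_zero {M P D : Matrix ι ι ℝ} (hM : M.PosDef)
    (hP : P.PosDef) (hD : D.IsSymm) (h : M * P * D + D * P * M = 0) : D = 0 := by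
  set L := CFC.sqrt P
  have hLL : L * L = P := CFC.sqrt_mul_sqrt_self P hP.posSemidef.nonneg
  have hLt : Lᵀ = L := transpose_sqrt P
  have hL : IsUnit L := (CFC.isUnit_sqrt_iff P hP.posSemidef.nonneg).mpr hP.isUnit
  have hLML : (L * M * L).PosDef := by
    simpa [hLt] using hM.conjTranspose_mul_mul_same (mulVec_injective_of_isUnit hL)
  have hLDL : (L * D * L).IsSymm := by
    simp [IsSymm, transpose_mul, hLt, hD.eq, mul_assoc]
  have hconj : L * M * L * (L * D * L) + L * D * L * (L * M * L) = 0 := by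
    have := congrArg (L * · * L) h
    simp only [mul_add, add_mul, mul_zero, zero_mul, ← hLL, mul_assoc] at this ⊢
    exact this
  have h0 := hLML.eq_zero_of_mul_add_mul_eq_zero hLDL hconj
  simpa [mul_assoc, hL.mul_right_eq_zero, hL.mul_left_eq_zero] using h0

lemma lyapunov_eq_zero_iff {T M Y : Matrix ι ι ℝ} (hT : T.PosDef) (hM : M.PosDef)
    (hY : Y.IsSymm) :
    (-(T⁻¹ * M))ᵀ * Y + Y * -(T⁻¹ * M) + M = 0 ↔ Y = (1 / 2 : ℝ) • T := by
  have hMt : Mᵀ = M := (isHermitian_iff_isSymm.mp hM.isHermitian).eq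
  have hTt : T.IsSymm := isHermitian_iff_isSymm.mp hT.isHermitian
  have hdet : IsUnit T.det := (isUnit_iff_isUnit_det T).mp hT.isUnit
  have key : (-(T⁻¹ * M))ᵀ * Y + Y * -(T⁻¹ * M) + M =
      -(M * T⁻¹ * (Y - (1 / 2 : ℝ) • T) + (Y - (1 / 2 : ℝ) • T) * T⁻¹ * M) := by
    simp only [transpose_neg, transpose_mul, hTt.inv.eq, hMt, mul_sub, sub_mul, Matrix.mul_smul,
      Matrix.smul_mul, mul_assoc, mul_nonsing_inv_cancel_left (A := T) _ hdet,
      nonsing_inv_mul T hdet, mul_one, neg_mul, mul_neg]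
    module
  rw [key, neg_eq_zero, ← sub_eq_zero (a := Y)]
  refine ⟨hM.eq_zero_of_mul_mul_add_mul_mul_eq_zero hT.inv (hY.sub (hTt.smul _)), ?_⟩
  rintro h
  rw [h, mul_zero, zero_mul, zero_mul, add_zero]

end Matrix

open scoped MatrixOrder in
theorem dual_ascent_H2_norm_general
    (n r m : ℕ)
    (Q : Matrix (Fin n) (Fin n) ℝ) (hQ : Q.PosDef)
    (S : Matrix (Fin r) (Fin n) ℝ) (hS : S.rank = r)
    (Wb : Matrix (Fin r) (Fin m) ℝ)
    (Tν : Matrix (Fin r) (Fin r) ℝ) (hTν : Tν.PosDef)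
    (tb : ℝ)
    (Adual : Matrix (Fin r) (Fin r) ℝ)
    (hAdual : Adual = -(Tν⁻¹ * S * Q⁻¹ * Sᵀ))
    (Bdual : Matrix (Fin r) (Fin m) ℝ)
    (hBdual : Bdual = tb • (Tν⁻¹ * Wb))
    (Cdual : Matrix (Fin n) (Fin r) ℝ)
    (hCdual : Cdual = -((CFC.sqrt Q)⁻¹ * Sᵀ)) :
    (Adualᵀ * ((1 / 2 : ℝ) • Tν) + ((1 / 2 : ℝ) • Tν) * Adual +
        Cdualᵀ * Cdual = 0) ∧
    (∀ Y : Matrix (Fin r) (Fin r) ℝ,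
      Y.IsSymm → Adualᵀ * Y + Y * Adual + Cdualᵀ * Cdual = 0 →
        Y = (1 / 2 : ℝ) • Tν) ∧
    (Bdualᵀ * ((1 / 2 : ℝ) • Tν) * Bdual).trace =
      tb ^ 2 / 2 * (Wbᵀ * Tν⁻¹ * Wb).trace := by
  have hM : (S * Q⁻¹ * Sᵀ).PosDef := hQ.mul_inv_mul_transpose (by rwa [Fintype.card_fin])
  have hA : Adual = -(Tν⁻¹ * (S * Q⁻¹ * Sᵀ)) := by
    simp only [hAdual, Matrix.mul_assoc]
  have hC : Cdualᵀ * Cdual = S * Q⁻¹ * Sᵀ := by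
    rw [hCdual, transpose_neg, Matrix.neg_mul, Matrix.mul_neg, neg_neg, transpose_mul,
      transpose_transpose, Matrix.mul_assoc, ← Matrix.mul_assoc _ (CFC.sqrt Q)⁻¹,
      hQ.transpose_inv_sqrt_mul_inv_sqrt, Matrix.mul_assoc]
  have hTt : Tν.IsSymm := isHermitian_iff_isSymm.mp hTν.isHermitian
  have hTdet : IsUnit Tν.det := (isUnit_iff_isUnit_det Tν).mp hTν.isUnit
  rw [hA, hC]
  refine ⟨(lyapunov_eq_zero_iff hTν hM (hTt.smul _)).mpr rfl,
    fun Y hY hYeq => (lyapunov_eq_zero_iff hTν hM hY).mp hYeq, ?_⟩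
  have hB : Bdualᵀ * ((1 / 2 : ℝ) • Tν) * Bdual = (tb ^ 2 / 2) • (Wbᵀ * Tν⁻¹ * Wb) := by
    simp only [hBdual, transpose_smul, transpose_mul, hTt.inv.eq, Matrix.smul_mul,
      Matrix.mul_smul, smul_smul, Matrix.mul_assoc, mul_nonsing_inv_cancel_left _ _ hTdet]
    congr 1
    ring
  rw [hB, trace_smul, smul_eq_mul]

open scoped MatrixOrder in
/-- `X = (1/2) Tν` is the unique symmetric solution of the
Lyapunov equation for the dual ascent dynamics, and the squared H₂ norm is
`Tr(B_dualᵀ X B_dual) = (t_b²/2)·Tr(Wbᵀ Tν⁻¹ Wb)`. -/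
theorem dual_ascent_H2_norm
    (n r m : ℕ) (hrn : r ≤ n)
    (Q : Matrix (Fin n) (Fin n) ℝ) (hQ : Q.PosDef)
    (S : Matrix (Fin r) (Fin n) ℝ) (hS : S.rank = r)
    (Wb : Matrix (Fin r) (Fin m) ℝ)
    (Tν : Matrix (Fin r) (Fin r) ℝ) (hTνd : Tν.IsDiag) (hTν : Tν.PosDef)
    (tb : ℝ) (htb : 0 ≤ tb)
    (Adual : Matrix (Fin r) (Fin r) ℝ)
    (hAdual : Adual = -(Tν⁻¹ * S * Q⁻¹ * Sᵀ))
    (Bdual : Matrix (Fin r) (Fin m) ℝ)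
    (hBdual : Bdual = tb • (Tν⁻¹ * Wb))
    (Cdual : Matrix (Fin n) (Fin r) ℝ)
    (hCdual : Cdual = -((CFC.sqrt Q)⁻¹ * Sᵀ)) :
    (Adualᵀ * ((1 / 2 : ℝ) • Tν) + ((1 / 2 : ℝ) • Tν) * Adual +
        Cdualᵀ * Cdual = 0) ∧
    (∀ Y : Matrix (Fin r) (Fin r) ℝ,
      Y.IsSymm → Adualᵀ * Y + Y * Adual + Cdualᵀ * Cdual = 0 →
        Y = (1 / 2 : ℝ) • Tν) ∧
    (Bdualᵀ * ((1 / 2 : ℝ) • Tν) * Bdual).trace =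
      tb ^ 2 / 2 * (Wbᵀ * Tν⁻¹ * Wb).trace :=
  dual_ascent_H2_norm_general n r m Q hQ S hS Wb Tν hTν tb Adual hAdual Bdual hBdual Cdual hCdual
end

section
/- Let n ≥ 2, let q, τ̄_ν > 0, let 0 = λ₁ < λ₂ ≤ ⋯ ≤ λ_n be reals, and let γ be a real number with 1/√(2τ̄_ν) < γ < √n/√(2τ̄_ν). If ρ ≥ (q/λ₂)·(n − 2τ̄_ν γ²)/(2τ̄_ν γ² − 1), then (1/(2τ̄_ν))·(1 + Σ_{i=2}^{n} q/(q + ρλ_i)) ≤ γ². -/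
/-!
Write `A = 2 τ̄ γ²`; the window for `γ` says exactly `1 < A < n`, which makes the lower bound
on `ρ` nonnegative. For `ρ ≥ 0` every term `q / (q + ρ λᵢ)` with `i ≥ 2` is at most the one
with `λ₂`, so the sum is at most `(n - 1) q / (q + ρ λ₂)`, and the bound on `ρ` is a
rearrangement of `(n - 1) q / (q + ρ λ₂) ≤ A - 1`.
-/

open Finset

lemma one_lt_mul_sq_of_one_div_sqrt_lt {c γ : ℝ} (hc : 0 < c) (h : 1 / √c < γ) :
    1 < c * γ ^ 2 := by
  have h' : 1 < γ * √c := by rwa [div_lt_iff₀ (Real.sqrt_pos.mpr hc)] at h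
  calc 1 < (γ * √c) ^ 2 := one_lt_pow₀ h' two_ne_zero
    _ = c * γ ^ 2 := by rw [mul_pow, Real.sq_sqrt hc.le, mul_comm]

lemma mul_sq_lt_of_lt_sqrt_div_sqrt {c γ x : ℝ} (hc : 0 < c) (hγ : 0 ≤ γ)
    (h : γ < √x / √c) : c * γ ^ 2 < x := by
  have h' : γ * √c < √x := by rwa [lt_div_iff₀ (Real.sqrt_pos.mpr hc)] at h
  have := (Real.lt_sqrt (by positivity)).mp h'
  rwa [mul_pow, Real.sq_sqrt hc.le, mul_comm] at this

lemma sum_univ_erase_le_mul {ι : Type*} [Fintype ι] [DecidableEq ι] (a : ι) (f : ι → ℝ)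
    {c : ℝ} (h : ∀ i ≠ a, f i ≤ c) :
    ∑ i ∈ univ.erase a, f i ≤ ((Fintype.card ι : ℝ) - 1) * c := by
  have hcard : ((#(univ.erase a) : ℕ) : ℝ) = (Fintype.card ι : ℝ) - 1 := by
    rw [card_erase_of_mem (mem_univ a), card_univ,
      Nat.cast_sub (Fintype.card_pos_iff.mpr ⟨a⟩), Nat.cast_one]
  calc ∑ i ∈ univ.erase a, f i ≤ #(univ.erase a) • c :=
        sum_le_card_nsmul _ _ _ fun i hi ↦ h i (ne_of_mem_erase hi)
    _ = ((Fintype.card ι : ℝ) - 1) * c := by rw [nsmul_eq_mul, hcard]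

section GainBound

variable {q l ρ A N : ℝ}

lemma nonneg_of_ge_div_mul_div (hq : 0 < q) (hl : 0 < l) (hA : 1 < A) (hAN : A ≤ N)
    (hρ : ρ ≥ q / l * ((N - A) / (A - 1))) : 0 ≤ ρ :=
  hρ.trans' <| mul_nonneg (div_pos hq hl).le (div_nonneg (by linarith) (by linarith))

lemma sub_one_mul_div_add_mul_le (hq : 0 < q) (hl : 0 < l) (hA : 1 < A) (hN : 1 < N)
    (hρ : ρ ≥ q / l * ((N - A) / (A - 1))) : (N - 1) * (q / (q + ρ * l)) ≤ A - 1 := by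
  have hA1 : 0 < A - 1 := by linarith
  have hρl : q * (N - A) ≤ ρ * l * (A - 1) := by
    rw [ge_iff_le, div_mul_div_comm, div_le_iff₀ (mul_pos hl hA1)] at hρ
    linarith
  have hden : 0 < q + ρ * l := by nlinarith
  rw [mul_div_assoc', div_le_iff₀ hden]
  nlinarith

end GainBound

/-- sufficient augmentation gain for a desired H₂ level.  If
`ρ ≥ (q/λ₂)·(n − 2τ̄ν γ²)/(2τ̄ν γ² − 1)` then
`(1/(2τ̄ν))(1 + Σ_{i≥2} q/(q+ρλᵢ)) ≤ γ²`. -/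
theorem ADD_SP_design_inequality
    (n : ℕ) (hn : 2 ≤ n)
    (q τν γ ρ : ℝ) (hq : 0 < q) (hτν : 0 < τν)
    (lam : Fin n → ℝ) (hmono : Monotone lam)
    (hlam1 : 0 < lam ⟨1, by omega⟩)
    (hγl : 1 / Real.sqrt (2 * τν) < γ)
    (hγu : γ < Real.sqrt n / Real.sqrt (2 * τν))
    (hρ : ρ ≥ q / lam ⟨1, by omega⟩ *
      (((n : ℝ) - 2 * τν * γ ^ 2) / (2 * τν * γ ^ 2 - 1))) :
    1 / (2 * τν) *
        (1 + ∑ i ∈ Finset.univ.erase (⟨0, by omega⟩ : Fin n),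
          q / (q + ρ * lam i)) ≤ γ ^ 2 := by
  have hc : 0 < 2 * τν := by positivity
  have hA : 1 < 2 * τν * γ ^ 2 := one_lt_mul_sq_of_one_div_sqrt_lt hc hγl
  have hγ : 0 ≤ γ := (one_div_pos.mpr (Real.sqrt_pos.mpr hc)).le.trans hγl.le
  have hAn : 2 * τν * γ ^ 2 < n := mul_sq_lt_of_lt_sqrt_div_sqrt hc hγ hγu
  have hN : (1 : ℝ) < n := by exact_mod_cast hn
  have hρ0 : 0 ≤ ρ := nonneg_of_ge_div_mul_div hq hlam1 hA hAn.le hρ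
  have hterm : ∀ i ≠ (⟨0, by omega⟩ : Fin n),
      q / (q + ρ * lam i) ≤ q / (q + ρ * lam ⟨1, by omega⟩) := fun i hi ↦ by
    have hle : lam ⟨1, by omega⟩ ≤ lam i :=
      hmono (Fin.le_def.mpr (Nat.one_le_iff_ne_zero.mpr (Fin.val_ne_iff.mpr hi)))
    gcongr
  calc 1 / (2 * τν) * (1 + ∑ i ∈ univ.erase (⟨0, by omega⟩ : Fin n), q / (q + ρ * lam i))
      ≤ 1 / (2 * τν) * (1 + ((n : ℝ) - 1) * (q / (q + ρ * lam ⟨1, by omega⟩))) := by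
        gcongr
        simpa using sum_univ_erase_le_mul _ _ hterm
    _ ≤ 1 / (2 * τν) * (2 * τν * γ ^ 2) := by
        gcongr
        linarith [sub_one_mul_div_add_mul_le hq hlam1 hA hN hρ]
    _ = γ ^ 2 := by field_simp
end
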